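/- arXiv:2201.10037 — 6 statements merged into one kernel-verified Lean document; each statement's English description precedes it below -/
import Mathlib

section
/- Let d be an n×n real matrix with zero diagonal and all off-diagonal entries strictly positive, with n ≥ 2. Define t_d to be the infimum of the set of t > 0 such that the matrix Z(t) with entries Z(t)_{jk} = exp(-t d_{jk}) is strictly diagonally dominant (i.e., 1 > Σ_{k≠j} exp(-t d_{jk}) for every j). Then log(n-1) / (min_j max_k d_{jk}) ≤ t_d ≤ log(n-1) / (min_j min_{k≠j} d_{jk}). -/
/-!
A row of `exp[-t d]` whose `N` off-diagonal entries all lie in `[c, C]` has off-diagonal sum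
between `N exp(-t C)` and `N exp(-t c)`; these are `< 1` exactly when `t C > log N`, resp.
`t c > log N`. Dominance of the row that minimises the row maximum therefore forces
`t > log(n-1) / minⱼ maxₖ dⱼₖ`, while every `t > log(n-1) / min_{j≠k} dⱼₖ` makes every row dominant.
-/

open Real Finset

section RowSums

variable {ι : Type*} {s : Finset ι} {x : ι → ℝ} {t : ℝ}

lemma sum_exp_neg_mul_lt_one_of_log_card_lt {c : ℝ} (hs : s.Nonempty) (ht : 0 ≤ t)
    (hc : ∀ k ∈ s, c ≤ x k) (hlog : log #s < t * c) :
    ∑ k ∈ s, exp (-t * x k) < 1 := by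
  have hcard : (0 : ℝ) < #s := by exact_mod_cast hs.card_pos
  calc ∑ k ∈ s, exp (-t * x k)
      ≤ #s • exp (-t * c) :=
        sum_le_card_nsmul _ _ _ fun k hk ↦ exp_le_exp.mpr (by nlinarith [hc k hk])
    _ = exp (log #s + -t * c) := by rw [nsmul_eq_mul, exp_add, exp_log hcard]
    _ < 1 := exp_lt_one_iff.mpr (by linarith)

lemma log_card_lt_of_sum_exp_neg_mul_lt_one {C : ℝ} (hs : s.Nonempty) (ht : 0 ≤ t)
    (hC : ∀ k ∈ s, x k ≤ C) (hsum : ∑ k ∈ s, exp (-t * x k) < 1) :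
    log #s < t * C := by
  have hcard : (0 : ℝ) < #s := by exact_mod_cast hs.card_pos
  have hexp : exp (log #s + -t * C) < 1 :=
    calc exp (log #s + -t * C)
        = #s • exp (-t * C) := by rw [nsmul_eq_mul, exp_add, exp_log hcard]
      _ ≤ ∑ k ∈ s, exp (-t * x k) :=
        card_nsmul_le_sum _ _ _ fun k hk ↦ exp_le_exp.mpr (by nlinarith [hC k hk])
      _ < 1 := hsum
  linarith [exp_lt_one_iff.mp hexp]

end RowSums

section OffDiagonal

variable {ι : Type*} [Finite ι] {d : Matrix ι ι ℝ}

lemma iInf_iInf_offDiag_le (d : Matrix ι ι ℝ) {j k : ι} (hkj : k ≠ j) :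
    ⨅ j, ⨅ k : {k : ι // k ≠ j}, d j k.1 ≤ d j k :=
  (Finite.ciInf_le _ j).trans (Finite.ciInf_le (fun k : {k : ι // k ≠ j} ↦ d j k.1) ⟨k, hkj⟩)

lemma iInf_iInf_offDiag_pos [Nontrivial ι] (hoff : ∀ j k, j ≠ k → 0 < d j k) :
    0 < ⨅ j, ⨅ k : {k : ι // k ≠ j}, d j k.1 := by
  obtain ⟨j, hj⟩ := exists_eq_ciInf_of_finite (f := fun j : ι ↦ ⨅ k : {k : ι // k ≠ j}, d j k.1)
  have : Nonempty {k : ι // k ≠ j} := nonempty_subtype.mpr (exists_ne j)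
  obtain ⟨k, hk⟩ := exists_eq_ciInf_of_finite (f := fun k : {k : ι // k ≠ j} ↦ d j k.1)
  rw [← hj, ← hk]
  exact hoff j k.1 (Ne.symm k.2)

end OffDiagonal

section DiagonalDominance

variable {ι : Type*} [Fintype ι] [DecidableEq ι] {d : Matrix ι ι ℝ}

def diagDominantScales (d : Matrix ι ι ℝ) : Set ℝ :=
  {t | 0 < t ∧ ∀ j, ∑ k ∈ univ.erase j, exp (-t * d j k) < 1}

lemma card_erase_univ_eq (j : ι) : (#(univ.erase j) : ℝ) = Fintype.card ι - 1 := by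
  rw [card_erase_of_mem (mem_univ j), card_univ, Nat.cast_pred (Fintype.card_pos_iff.mpr ⟨j⟩)]

lemma erase_univ_nonempty [Nontrivial ι] (j : ι) : (univ.erase j).Nonempty :=
  let ⟨k, hk⟩ := exists_ne j
  ⟨k, mem_erase.mpr ⟨hk, mem_univ k⟩⟩

lemma mem_diagDominantScales_of_lt [Nontrivial ι] (hoff : ∀ j k, j ≠ k → 0 < d j k) {t : ℝ}
    (ht : log (Fintype.card ι - 1) / ⨅ j, ⨅ k : {k : ι // k ≠ j}, d j k.1 < t) :
    t ∈ diagDominantScales d := by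
  have hmin := iInf_iInf_offDiag_pos hoff
  have hcard : (1 : ℝ) ≤ Fintype.card ι - 1 := by
    have : (2 : ℝ) ≤ Fintype.card ι := by exact_mod_cast Fintype.one_lt_card (α := ι)
    linarith
  have htpos : 0 < t := (div_nonneg (log_nonneg hcard) hmin.le).trans_lt ht
  refine ⟨htpos, fun j ↦ sum_exp_neg_mul_lt_one_of_log_card_lt (erase_univ_nonempty j) htpos.le
    (fun k hk ↦ iInf_iInf_offDiag_le d (ne_of_mem_erase hk)) ?_⟩
  rw [card_erase_univ_eq]
  exact (div_lt_iff₀ hmin).mp ht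

lemma lt_of_mem_diagDominantScales [Nontrivial ι] (hoff : ∀ j k, j ≠ k → 0 < d j k) {t : ℝ}
    (ht : t ∈ diagDominantScales d) : log (Fintype.card ι - 1) / ⨅ j, ⨆ k, d j k < t := by
  obtain ⟨j, hj⟩ := exists_eq_ciInf_of_finite (f := fun j : ι ↦ ⨆ k, d j k)
  have hrow : ∀ k, d j k ≤ ⨅ j, ⨆ k, d j k := fun k ↦ hj ▸ Finite.le_ciSup (d j) k
  have hpos : 0 < ⨅ j, ⨆ k, d j k :=
    let ⟨k, hk⟩ := exists_ne j
    (hoff j k hk.symm).trans_le (hrow k)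
  have hlog := log_card_lt_of_sum_exp_neg_mul_lt_one (erase_univ_nonempty j) ht.1.le
    (fun k _ ↦ hrow k) (ht.2 j)
  rw [card_erase_univ_eq] at hlog
  exact (div_lt_iff₀ hpos).mpr hlog

lemma le_csInf_diagDominantScales [Nontrivial ι] (hoff : ∀ j k, j ≠ k → 0 < d j k) :
    log (Fintype.card ι - 1) / ⨅ j, ⨆ k, d j k ≤ sInf (diagDominantScales d) :=
  le_csInf ⟨_, mem_diagDominantScales_of_lt hoff (lt_add_one _)⟩
    fun _ ht ↦ (lt_of_mem_diagDominantScales hoff ht).le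

lemma csInf_diagDominantScales_le [Nontrivial ι] (hoff : ∀ j k, j ≠ k → 0 < d j k) :
    sInf (diagDominantScales d) ≤
      log (Fintype.card ι - 1) / ⨅ j, ⨅ k : {k : ι // k ≠ j}, d j k.1 :=
  le_of_forall_gt_imp_ge_of_dense fun _ ht ↦
    csInf_le ⟨0, fun _ hs ↦ hs.1.le⟩ (mem_diagDominantScales_of_lt hoff ht)

end DiagonalDominance

theorem diagonal_cutoff_bounds_general (n : ℕ) (hn : 2 ≤ n) (d : Matrix (Fin n) (Fin n) ℝ)
    (hoff : ∀ j k, j ≠ k → 0 < d j k) :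
    Real.log (n - 1) / (⨅ j, ⨆ k, d j k) ≤
      sInf {t : ℝ | 0 < t ∧ ∀ j, ∑ k ∈ Finset.univ.erase j, Real.exp (-t * d j k) < 1} ∧
    sInf {t : ℝ | 0 < t ∧ ∀ j, ∑ k ∈ Finset.univ.erase j, Real.exp (-t * d j k) < 1} ≤
      Real.log (n - 1) / (⨅ j, ⨅ k : {k : Fin n // k ≠ j}, d j k.1) := by
  have : Nontrivial (Fin n) := Fin.nontrivial_iff_two_le.mpr hn
  have bounds := And.intro (le_csInf_diagDominantScales hoff) (csInf_diagDominantScales_le hoff)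
  rw [Fintype.card_fin] at bounds
  exact bounds

/-- Bounds on the diagonal cutoff scale `t_d`, the infimum of scales `t > 0` at which
`exp[-t d]` is strictly diagonally dominant. -/
theorem diagonal_cutoff_bounds (n : ℕ) (hn : 2 ≤ n) (d : Matrix (Fin n) (Fin n) ℝ)
    (hdiag : ∀ j, d j j = 0) (hoff : ∀ j k, j ≠ k → 0 < d j k) :
    Real.log (n - 1) / (⨅ j, ⨆ k, d j k) ≤
      sInf {t : ℝ | 0 < t ∧ ∀ j, ∑ k ∈ Finset.univ.erase j, Real.exp (-t * d j k) < 1} ∧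
    sInf {t : ℝ | 0 < t ∧ ∀ j, ∑ k ∈ Finset.univ.erase j, Real.exp (-t * d j k) < 1} ≤
      Real.log (n - 1) / (⨅ j, ⨅ k : {k : Fin n // k ≠ j}, d j k.1) :=
  diagonal_cutoff_bounds_general n hn d hoff
end

section
/- Let Z be a symmetric positive definite n×n real matrix with positive entries, and suppose its unique weighting w (the solution of Z w = 1) has all entries strictly positive. Let p = w / (Σ_j w_j) be the normalized weighting, viewed as a probability distribution. Then (Z p)_j = 1/(Σ_k w_k) for every j; consequently, for every q with 1 < q < ∞, the diversity of order q of p, defined as exp( (1/(1-q)) log Σ_{j : p_j > 0} p_j (Z p)_j^{q-1} ), equals Σ_j w_j, independently of q. -/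
open Finset Matrix

noncomputable def diversity {ι : Type*} [Fintype ι] (Z : Matrix ι ι ℝ) (p : ι → ℝ) (q : ℝ) : ℝ :=
  Real.exp ((1 / (1 - q)) *
    Real.log (∑ j ∈ univ.filter (fun j => 0 < p j), p j * (Z *ᵥ p) j ^ (q - 1)))

theorem Matrix.mulVec_div_const_of_mulVec_eq_one {ι 𝕜 : Type*} [Fintype ι] [Field 𝕜]
    {Z : Matrix ι ι 𝕜} {w : ι → 𝕜} (hw : Z *ᵥ w = 1) (c : 𝕜) :
    Z *ᵥ (fun i => w i / c) = fun _ => 1 / c := by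
  have hsmul : (fun i => w i / c) = c⁻¹ • w := funext fun i => div_eq_inv_mul (w i) c
  rw [hsmul, mulVec_smul, hw]
  ext j
  simp [div_eq_inv_mul]

theorem Real.exp_one_div_one_sub_mul_log_rpow {c q : ℝ} (hc : 0 < c) (hq : q ≠ 1) :
    Real.exp ((1 / (1 - q)) * Real.log (c ^ (q - 1))) = c⁻¹ := by
  have hq' : 1 - q ≠ 0 := sub_ne_zero.mpr hq.symm
  have hexp : (1 / (1 - q)) * ((q - 1) * Real.log c) = -Real.log c := by
    field_simp
    ring
  rw [Real.log_rpow hc, hexp, Real.exp_neg, Real.exp_log hc]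

theorem diversity_eq_inv_of_mulVec_eq_const {ι : Type*} [Fintype ι] {Z : Matrix ι ι ℝ}
    {p : ι → ℝ} (hp_nonneg : ∀ j, 0 ≤ p j) (hp_sum : ∑ j, p j = 1) {c : ℝ} (hc : 0 < c)
    (hZp : Z *ᵥ p = fun _ => c) {q : ℝ} (hq : q ≠ 1) :
    diversity Z p q = c⁻¹ := by
  have hsupport : ∑ j ∈ univ.filter (fun j => 0 < p j), p j = 1 := by
    rw [sum_filter_of_ne fun j _ hj => (hp_nonneg j).lt_of_ne' hj, hp_sum]
  have hsum : ∑ j ∈ univ.filter (fun j => 0 < p j), p j * (Z *ᵥ p) j ^ (q - 1)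
      = c ^ (q - 1) := by
    rw [hZp, ← sum_mul, hsupport, one_mul]
  rw [diversity, hsum, Real.exp_one_div_one_sub_mul_log_rpow hc hq]

theorem weighting_maximizes_diversity_general (n : ℕ) (hn : 0 < n)
    (Z : Matrix (Fin n) (Fin n) ℝ)
    (w : Fin n → ℝ) (hw : Z.mulVec w = 1) (hwpos : ∀ j, 0 < w j) :
    (∀ j, Z.mulVec (fun i => w i / ∑ k, w k) j = 1 / ∑ k, w k) ∧
    ∀ q : ℝ, 1 < q →
      Real.exp ((1 / (1 - q)) *
        Real.log (∑ j ∈ Finset.univ.filter (fun j => 0 < w j / ∑ k, w k),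
          (w j / ∑ k, w k) * (Z.mulVec (fun i => w i / ∑ k, w k) j) ^ (q - 1))) =
      ∑ j, w j := by
  have hS : 0 < ∑ k, w k := sum_pos (fun k _ => hwpos k) ⟨⟨0, hn⟩, mem_univ _⟩
  have hZp := mulVec_div_const_of_mulVec_eq_one hw (∑ k, w k)
  refine ⟨fun j => congrFun hZp j, fun q hq => ?_⟩
  have hp_sum : ∑ j, w j / ∑ k, w k = 1 := by rw [← sum_div, div_self hS.ne']
  have hdiv := diversity_eq_inv_of_mulVec_eq_const (fun j => (div_pos (hwpos j) hS).le)
    hp_sum (one_div_pos.mpr hS) hZp hq.ne'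
  rwa [one_div, inv_inv] at hdiv

/-- For a symmetric positive definite similarity matrix with positive entries whose
weighting is positive, the normalized weighting `p = w / Σ w` satisfies
`(Z p)_j = 1 / Σ w` for all `j`, and the diversity of every order `q ∈ (1, ∞)` at `p`
equals the magnitude `Σ w`. -/
theorem weighting_maximizes_diversity (n : ℕ) (hn : 0 < n)
    (Z : Matrix (Fin n) (Fin n) ℝ) (hsym : Z.IsSymm) (hpd : Z.PosDef)
    (hpos : ∀ j k, 0 < Z j k)
    (w : Fin n → ℝ) (hw : Z.mulVec w = 1) (hwpos : ∀ j, 0 < w j) :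
    (∀ j, Z.mulVec (fun i => w i / ∑ k, w k) j = 1 / ∑ k, w k) ∧
    ∀ q : ℝ, 1 < q →
      Real.exp ((1 / (1 - q)) *
        Real.log (∑ j ∈ Finset.univ.filter (fun j => 0 < w j / ∑ k, w k),
          (w j / ∑ k, w k) * (Z.mulVec (fun i => w i / ∑ k, w k) j) ^ (q - 1))) =
      ∑ j, w j :=
  weighting_maximizes_diversity_general n hn Z w hw hwpos
end

section
/- Let d be an invertible n×n real matrix with 1^T d^{-1} 1 ≠ 0, and for t > 0 near 0 suppose the entrywise exponential matrix Z(t) = exp[-t d] is invertible with weighting w(t) = Z(t)^{-1} 1. Then w(t) converges as t ↓ 0 to d^{-1} 1 / (1^T d^{-1} 1). -/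
/-!
Entrywise, `exp[-t d] = 1 1ᵀ - t M(t)` with `M(t) = (1 - exp[-t d]) / t`, and `M(t) → d` as `t → 0`
since the entries are difference quotients of `t ↦ 1 - exp (-t a)` at `0`. A rank-one matrix
minus `t M` with `M` invertible is inverted on `1` explicitly:
`(1 1ᵀ - t M)⁻¹ 1 = M⁻¹ 1 / (1ᵀ M⁻¹ 1 - t)` whenever `t ≠ 0` and `1ᵀ M⁻¹ 1 ≠ t`, and the
right-hand side is continuous in `(M, t)` at `(d, 0)`.
-/

open Filter Topology Matrix

namespace Matrix

variable {ι K : Type*} [Fintype ι] [DecidableEq ι] [Field K]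

theorem vecMulVec_sub_smul_mulVec_inv_mulVec {M : Matrix ι ι K} (hM : IsUnit M.det)
    (u v : ι → K) (t : K) :
    (vecMulVec u v - t • M) *ᵥ (M⁻¹ *ᵥ u) = (v ⬝ᵥ M⁻¹ *ᵥ u - t) • u := by
  rw [sub_mulVec, vecMulVec_mulVec, op_smul_eq_smul, smul_mulVec, mulVec_mulVec,
    mul_nonsing_inv _ hM, one_mulVec, sub_smul]

theorem isUnit_det_vecMulVec_sub_smul {M : Matrix ι ι K} (hM : IsUnit M.det)
    (u v : ι → K) {t : K} (ht : t ≠ 0) (hc : v ⬝ᵥ M⁻¹ *ᵥ u ≠ t) :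
    IsUnit (vecMulVec u v - t • M).det := by
  rw [isUnit_iff_ne_zero, ne_eq, ← exists_mulVec_eq_zero_iff]
  rintro ⟨x, hx0, hx⟩
  have hux : (v ⬝ᵥ x) • (M⁻¹ *ᵥ u) = t • x := by
    rw [sub_mulVec, vecMulVec_mulVec, op_smul_eq_smul, sub_eq_zero, smul_mulVec] at hx
    simpa [mulVec_smul, mulVec_mulVec, nonsing_inv_mul _ hM] using congrArg (M⁻¹ *ᵥ ·) hx
  have hvx : v ⬝ᵥ x = 0 := by
    have hdot : (v ⬝ᵥ x) * (v ⬝ᵥ M⁻¹ *ᵥ u) = t * (v ⬝ᵥ x) := by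
      simpa only [dotProduct_smul, smul_eq_mul] using congrArg (v ⬝ᵥ ·) hux
    have : (v ⬝ᵥ x) * (v ⬝ᵥ M⁻¹ *ᵥ u - t) = 0 := by rw [mul_sub, hdot]; ring
    exact (mul_eq_zero.mp this).resolve_right (sub_ne_zero.mpr hc)
  rw [hvx, zero_smul, eq_comm, smul_eq_zero] at hux
  exact hux.elim ht hx0

theorem inv_vecMulVec_sub_smul_mulVec {M : Matrix ι ι K} (hM : IsUnit M.det)
    (u v : ι → K) {t : K} (ht : t ≠ 0) (hc : v ⬝ᵥ M⁻¹ *ᵥ u ≠ t) :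
    (vecMulVec u v - t • M)⁻¹ *ᵥ u = (v ⬝ᵥ M⁻¹ *ᵥ u - t)⁻¹ • M⁻¹ *ᵥ u := by
  set A := vecMulVec u v - t • M
  have hAw : A *ᵥ ((v ⬝ᵥ M⁻¹ *ᵥ u - t)⁻¹ • M⁻¹ *ᵥ u) = u := by
    rw [mulVec_smul, vecMulVec_sub_smul_mulVec_inv_mulVec hM, smul_smul,
      inv_mul_cancel₀ (sub_ne_zero.mpr hc), one_smul]
  calc A⁻¹ *ᵥ u = A⁻¹ *ᵥ (A *ᵥ ((v ⬝ᵥ M⁻¹ *ᵥ u - t)⁻¹ • M⁻¹ *ᵥ u)) := by rw [hAw]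
    _ = _ := by
      rw [mulVec_mulVec, nonsing_inv_mul _ (isUnit_det_vecMulVec_sub_smul hM u v ht hc),
        one_mulVec]


theorem tendsto_inv_vecMulVec_sub_smul_mulVec {𝕜 : Type*} [NormedField 𝕜]
    {M : 𝕜 → Matrix ι ι 𝕜} {D : Matrix ι ι 𝕜} (hM : Tendsto M (𝓝[≠] 0) (𝓝 D))
    (hD : IsUnit D.det) (u v : ι → 𝕜) (hc : v ⬝ᵥ D⁻¹ *ᵥ u ≠ 0) :
    Tendsto (fun t => (vecMulVec u v - t • M t)⁻¹ *ᵥ u) (𝓝[≠] 0)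
      (𝓝 ((v ⬝ᵥ D⁻¹ *ᵥ u)⁻¹ • D⁻¹ *ᵥ u)) := by
  have hMinv : Tendsto (fun t => (M t)⁻¹) (𝓝[≠] 0) (𝓝 D⁻¹) := by
    refine (continuousAt_matrix_inv D ?_).tendsto.comp hM
    simpa [Ring.inverse_eq_inv'] using continuousAt_inv₀ (isUnit_iff_ne_zero.mp hD)
  have hMinv_u : Tendsto (fun t => (M t)⁻¹ *ᵥ u) (𝓝[≠] 0) (𝓝 (D⁻¹ *ᵥ u)) :=
    ((Continuous.matrix_mulVec continuous_id continuous_const).tendsto _).comp hMinv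
  have hc_sub : Tendsto (fun t => v ⬝ᵥ (M t)⁻¹ *ᵥ u - t) (𝓝[≠] 0) (𝓝 (v ⬝ᵥ D⁻¹ *ᵥ u)) := by
    simpa using ((continuous_const.dotProduct continuous_id).tendsto _ |>.comp hMinv_u).sub
      (tendsto_nhdsWithin_of_tendsto_nhds tendsto_id)
  have hdet : ∀ᶠ t in 𝓝[≠] 0, IsUnit (M t).det :=
    ((continuous_id.matrix_det.tendsto D).comp hM).eventually
      (isOpen_ne.mem_nhds (isUnit_iff_ne_zero.mp hD)) |>.mono fun _ => isUnit_iff_ne_zero.mpr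
  refine ((hc_sub.inv₀ hc).smul hMinv_u).congr' ?_
  filter_upwards [hdet, hc_sub.eventually_ne hc, self_mem_nhdsWithin] with t hMt hct ht
  exact (inv_vecMulVec_sub_smul_mulVec hMt u v ht (sub_ne_zero.mp hct)).symm

end Matrix

theorem Real.tendsto_one_sub_exp_neg_mul_div (a : ℝ) :
    Tendsto (fun t => (1 - Real.exp (-t * a)) / t) (𝓝[≠] 0) (𝓝 a) := by
  have hderiv : HasDerivAt (fun t => 1 - Real.exp (-t * a)) a 0 := by
    simpa using (((hasDerivAt_id (0 : ℝ)).neg.mul_const a).exp).const_sub 1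
  refine (hasDerivAt_iff_tendsto_slope.mp hderiv).congr fun t => ?_
  simp [slope_def_field]

theorem weighting_limit_at_zero_general (n : ℕ) (d : Matrix (Fin n) (Fin n) ℝ)
    (hd : IsUnit d.det) (hsum : ∑ j, ∑ k, d⁻¹ j k ≠ 0) :
    Filter.Tendsto
      (fun t : ℝ => (Matrix.of (fun j k => Real.exp (-t * d j k)))⁻¹.mulVec 1)
      (nhdsWithin 0 (Set.Ioi 0))
      (nhds (fun j => d⁻¹.mulVec 1 j / ∑ i, ∑ k, d⁻¹ i k)) := by
  set M : ℝ → Matrix (Fin n) (Fin n) ℝ := fun t => of fun j k => (1 - Real.exp (-t * d j k)) / t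
  have hM : Tendsto M (𝓝[≠] 0) (𝓝 d) := tendsto_pi_nhds.2 fun j => tendsto_pi_nhds.2 fun k =>
    Real.tendsto_one_sub_exp_neg_mul_div (d j k)
  have hZ : ∀ t ≠ 0, of (fun j k => Real.exp (-t * d j k)) = vecMulVec 1 1 - t • M t := by
    intro t ht
    ext j k
    simp only [M, of_apply, Matrix.sub_apply, Matrix.smul_apply, vecMulVec_apply, Pi.one_apply,
      mul_one, smul_eq_mul]
    field_simp
    ring
  have hS : (1 : Fin n → ℝ) ⬝ᵥ d⁻¹ *ᵥ 1 = ∑ j, ∑ k, d⁻¹ j k := by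
    simp [one_dotProduct, mulVec, dotProduct_one]
  have hlim := tendsto_inv_vecMulVec_sub_smul_mulVec hM hd 1 1 (hS ▸ hsum)
  rw [hS] at hlim
  have htarget : (∑ j, ∑ k, d⁻¹ j k)⁻¹ • d⁻¹ *ᵥ 1 = fun j => (d⁻¹ *ᵥ 1) j / ∑ i, ∑ k, d⁻¹ i k := by
    ext j
    simp [div_eq_inv_mul]
  rw [htarget] at hlim
  refine (hlim.mono_left (nhdsWithin_mono _ fun t ht => ne_of_gt ht)).congr' ?_
  filter_upwards [self_mem_nhdsWithin] with t ht
  rw [hZ t (ne_of_gt ht)]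

/-- As `t ↓ 0`, the weighting of `exp[-t d]` converges to `d⁻¹ 1 / (1ᵀ d⁻¹ 1)`. -/
theorem weighting_limit_at_zero (n : ℕ) (d : Matrix (Fin n) (Fin n) ℝ)
    (hd : IsUnit d.det) (hsum : ∑ j, ∑ k, d⁻¹ j k ≠ 0)
    (hinv : ∃ ε > (0 : ℝ), ∀ t : ℝ, 0 < t → t < ε →
      IsUnit (Matrix.of (fun j k => Real.exp (-t * d j k))).det) :
    Filter.Tendsto
      (fun t : ℝ => (Matrix.of (fun j k => Real.exp (-t * d j k)))⁻¹.mulVec 1)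
      (nhdsWithin 0 (Set.Ioi 0))
      (nhds (fun j => d⁻¹.mulVec 1 j / ∑ i, ∑ k, d⁻¹ i k)) :=
  weighting_limit_at_zero_general n d hd hsum
end

section
/- Let (X, d) be a finite metric space with n points x_1,…,x_n and pairwise-distinct points (d(x_j,x_k) > 0 for j ≠ k). Then as t → ∞, the weighting w(t) of Z(t) = exp[-t d] (when it exists, e.g. for all sufficiently large t) converges to the all-ones vector, and hence the magnitude function Mag(t; d) = Σ_j w(t)_j converges to n as t → ∞. -/
/-!
Off the diagonal the entries `exp (-t d(x_j, x_k))` tend to `0` because the points are distinct,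
so `Z(t) → 1`. Matrix inversion is continuous at the invertible matrix `1`, hence
`w(t) = Z(t)⁻¹ 1 → 1`, and summing the coordinates gives `Mag(t) → n`.
-/

open Filter Topology Matrix

theorem tendsto_of_exp_neg_mul_atTop_one {ι : Type*} [DecidableEq ι] (d : ι → ι → ℝ)
    (hdiag : ∀ j, d j j = 0) (hpos : ∀ j k, j ≠ k → 0 < d j k) :
    Tendsto (fun t : ℝ => Matrix.of fun j k => Real.exp (-t * d j k)) atTop (𝓝 1) := by
  refine tendsto_pi_nhds.2 fun j => tendsto_pi_nhds.2 fun k => ?_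
  rcases eq_or_ne j k with rfl | hjk
  · simp [hdiag]
  · rw [one_apply_ne hjk]
    exact Real.tendsto_exp_atBot.comp (tendsto_neg_atTop_atBot.atBot_mul_const (hpos j k hjk))

theorem Filter.Tendsto.matrix_inv_mulVec {α ι K : Type*} [Fintype ι] [DecidableEq ι] [Field K]
    [TopologicalSpace K] [IsTopologicalDivisionRing K] {l : Filter α} {A : α → Matrix ι ι K}
    {B : Matrix ι ι K} (hA : Tendsto A l (𝓝 B)) (hB : B.det ≠ 0) (v : ι → K) :
    Tendsto (fun a => (A a)⁻¹ *ᵥ v) l (𝓝 (B⁻¹ *ᵥ v)) := by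
  have hinv : ContinuousAt Inv.inv B :=
    continuousAt_matrix_inv B (by simpa only [Ring.inverse_eq_inv'] using continuousAt_inv₀ hB)
  exact ((continuous_id.matrix_mulVec continuous_const).tendsto _).comp (hinv.tendsto.comp hA)

/-- As `t → ∞`, the weighting of `exp[-t d]` on a finite metric space of `n` distinct
points converges to the all-ones vector, and the magnitude function converges to `n`. -/
theorem weighting_limit_at_infinity (X : Type*) [MetricSpace X] (n : ℕ)
    (x : Fin n → X) (hx : Function.Injective x) :
    Filter.Tendsto
      (fun t : ℝ => (Matrix.of (fun j k => Real.exp (-t * dist (x j) (x k))))⁻¹.mulVec 1)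
      Filter.atTop (nhds (1 : Fin n → ℝ)) ∧
    Filter.Tendsto
      (fun t : ℝ =>
        ∑ j, (Matrix.of (fun j k => Real.exp (-t * dist (x j) (x k))))⁻¹.mulVec 1 j)
      Filter.atTop (nhds (n : ℝ)) := by
  have hZ := tendsto_of_exp_neg_mul_atTop_one (fun j k => dist (x j) (x k))
    (fun j => dist_self (x j)) (fun j k hjk => dist_pos.2 (hx.ne hjk))
  have hw := hZ.matrix_inv_mulVec (by simp) 1
  rw [inv_one, one_mulVec] at hw
  refine ⟨hw, ?_⟩
  simpa using tendsto_finsetSum Finset.univ fun j _ => ((continuous_apply j).tendsto _).comp hw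
end

section
/- Consider the three-point metric space {x_1, x_2, x_3} with d(x_1,x_2) = d(x_1,x_3) = 1 and d(x_2,x_3) = δ where 0 < δ < 2. For t > 0, the weighting w of Z = exp[-t d] satisfies w_1 = (e^{(δ+2)t} - 2 e^{(δ+1)t} + e^{2t}) / (e^{(δ+2)t} - 2 e^{δ t} + e^{2t}) and w_2 = w_3 = (e^{(δ+2)t} - e^{(δ+1)t}) / (e^{(δ+2)t} - 2 e^{δ t} + e^{2t}). -/
/-!
Writing `p = e^{-t}` and `q = e^{-δt}`, the matrix is `[[1,p,p],[p,1,q],[p,q,1]]`, whose weighting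
(symmetric in the last two points) is `(1 + q - 2p, 1 - p, 1 - p) / (1 + q - 2p²)`. Multiplying
numerator and denominator by `e^{(δ+2)t}` gives the stated formulas, and the denominator is
`(e^{(δ+2)t} - e^{δt}) + (e^{2t} - e^{δt}) > 0` because `δ < 2`.
-/

open Real Matrix

theorem isosceles_mulVec_weighting_eq_one {K : Type*} [Field K] (p q : K)
    (h : 1 + q - 2 * p ^ 2 ≠ 0) :
    Matrix.of ![![1, p, p], ![p, 1, q], ![p, q, 1]] *ᵥ
      ![(1 + q - 2 * p) / (1 + q - 2 * p ^ 2), (1 - p) / (1 + q - 2 * p ^ 2),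
        (1 - p) / (1 + q - 2 * p ^ 2)] = 1 := by
  generalize hD : 1 + q - 2 * p ^ 2 = D at h
  ext i
  fin_cases i <;>
  · simp [mulVec, dotProduct, Fin.sum_univ_three]
    field_simp
    linear_combination hD

theorem exp_sub_two_exp_add_exp_pos {δ t : ℝ} (hδ2 : δ < 2) (ht : 0 < t) :
    0 < exp ((δ + 2) * t) - 2 * exp (δ * t) + exp (2 * t) := by
  have h₁ : exp (δ * t) < exp ((δ + 2) * t) := exp_lt_exp.2 (by nlinarith)
  have h₂ : exp (δ * t) < exp (2 * t) := exp_lt_exp.2 (by nlinarith)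
  linarith

theorem isoceles_weighting_general (δ t : ℝ) (hδ2 : δ < 2) (ht : 0 < t) :
    Real.exp ((δ + 2) * t) - 2 * Real.exp (δ * t) + Real.exp (2 * t) ≠ 0 ∧
    (Matrix.of ![![1, Real.exp (-t), Real.exp (-t)],
                 ![Real.exp (-t), 1, Real.exp (-δ * t)],
                 ![Real.exp (-t), Real.exp (-δ * t), 1]]).mulVec
      ![(Real.exp ((δ + 2) * t) - 2 * Real.exp ((δ + 1) * t) + Real.exp (2 * t)) /
          (Real.exp ((δ + 2) * t) - 2 * Real.exp (δ * t) + Real.exp (2 * t)),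
        (Real.exp ((δ + 2) * t) - Real.exp ((δ + 1) * t)) /
          (Real.exp ((δ + 2) * t) - 2 * Real.exp (δ * t) + Real.exp (2 * t)),
        (Real.exp ((δ + 2) * t) - Real.exp ((δ + 1) * t)) /
          (Real.exp ((δ + 2) * t) - 2 * Real.exp (δ * t) + Real.exp (2 * t))] = 1 := by
  set c := exp ((δ + 2) * t)
  have hc : c ≠ 0 := (exp_pos _).ne'
  have hq : exp (2 * t) = c * exp (-δ * t) := by rw [← exp_add]; ring_nf
  have hp : exp ((δ + 1) * t) = c * exp (-t) := by rw [← exp_add]; ring_nf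
  have hp2 : exp (δ * t) = c * exp (-t) ^ 2 := by rw [← exp_nat_mul, ← exp_add]; ring_nf
  have hD := exp_sub_two_exp_add_exp_pos hδ2 ht
  refine ⟨hD.ne', ?_⟩
  have hD' : 1 + exp (-δ * t) - 2 * exp (-t) ^ 2 ≠ 0 := by
    intro h0
    apply hD.ne'
    rw [hq, hp2]
    linear_combination c * h0
  convert isosceles_mulVec_weighting_eq_one _ _ hD' using 2
  rw [hq, hp, hp2]
  ext i
  fin_cases i <;>
  · simp only [Fin.zero_eta, Fin.mk_one, Fin.reduceFinMk, cons_val]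
    conv_rhs => rw [← mul_div_mul_left _ _ hc]
    congr 1 <;> ring

/-- Explicit weighting for the isoceles three-point metric space with side lengths
`1, 1, δ`. -/
theorem isoceles_weighting (δ t : ℝ) (hδ0 : 0 < δ) (hδ2 : δ < 2) (ht : 0 < t) :
    Real.exp ((δ + 2) * t) - 2 * Real.exp (δ * t) + Real.exp (2 * t) ≠ 0 ∧
    (Matrix.of ![![1, Real.exp (-t), Real.exp (-t)],
                 ![Real.exp (-t), 1, Real.exp (-δ * t)],
                 ![Real.exp (-t), Real.exp (-δ * t), 1]]).mulVec
      ![(Real.exp ((δ + 2) * t) - 2 * Real.exp ((δ + 1) * t) + Real.exp (2 * t)) /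
          (Real.exp ((δ + 2) * t) - 2 * Real.exp (δ * t) + Real.exp (2 * t)),
        (Real.exp ((δ + 2) * t) - Real.exp ((δ + 1) * t)) /
          (Real.exp ((δ + 2) * t) - 2 * Real.exp (δ * t) + Real.exp (2 * t)),
        (Real.exp ((δ + 2) * t) - Real.exp ((δ + 1) * t)) /
          (Real.exp ((δ + 2) * t) - 2 * Real.exp (δ * t) + Real.exp (2 * t))] = 1 :=
  isoceles_weighting_general δ t hδ2 ht
end

section
/- Let Z be an n×n strictly diagonally dominant matrix with Z_{jj} = 1 for all j and Z_{jk} ∈ [0,1) for j ≠ k (for example Z = exp[-t d] with t above the diagonal cutoff of a finite metric space). Then Z is invertible and its unique weighting w = Z^{-1} 1 has all entries strictly positive. -/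
/-! Let `w` solve `Z w = 1` and let `m = w i` be its smallest entry. If `m ≤ 0`, every row gives
`w k = 1 - ∑_{l ≠ k} Z k l w l ≤ 1 - m`, and then row `i` gives
`m ≥ 1 - (1 - m) ∑_{l ≠ i} Z i l`, i.e. `(1 - m)(1 - ∑_{l ≠ i} Z i l) ≤ 0`,
which strict diagonal dominance rules out. -/

open Finset

namespace Matrix

variable {ι K : Type*} [Fintype ι] [DecidableEq ι]

theorem mulVec_apply_eq_diag_add_sum_erase [NonUnitalNonAssocSemiring K] (Z : Matrix ι ι K)
    (w : ι → K) (j : ι) :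
    (Z *ᵥ w) j = Z j j * w j + ∑ k ∈ univ.erase j, Z j k * w k := by
  rw [mulVec, dotProduct, ← add_sum_erase _ _ (mem_univ j)]

theorem det_ne_zero_of_sum_row_erase_lt_one (Z : Matrix ι ι ℝ) (hdiag : ∀ j, Z j j = 1)
    (hoff : ∀ j k, j ≠ k → 0 ≤ Z j k) (hdd : ∀ j, ∑ k ∈ univ.erase j, Z j k < 1) :
    Z.det ≠ 0 := by
  refine det_ne_zero_of_sum_row_lt_diag fun j => ?_
  rw [hdiag j, norm_one]
  calc ∑ k ∈ univ.erase j, ‖Z j k‖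
      = ∑ k ∈ univ.erase j, Z j k :=
        sum_congr rfl fun k hk => Real.norm_of_nonneg (hoff j k (ne_of_mem_erase hk).symm)
    _ < 1 := hdd j

theorem add_sum_erase_mul_eq_one_of_mulVec_eq_one [NonAssocSemiring K] {Z : Matrix ι ι K}
    {w : ι → K} (hdiag : ∀ j, Z j j = 1) (hZw : Z *ᵥ w = 1) (j : ι) :
    w j + ∑ k ∈ univ.erase j, Z j k * w k = 1 := by
  simpa [mulVec_apply_eq_diag_add_sum_erase, hdiag j] using congrFun hZw j

section Weighting

variable [Field K] [LinearOrder K] [IsStrictOrderedRing K] {Z : Matrix ι ι K} {w : ι → K}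

theorem le_one_sub_of_forall_le_of_nonpos (hdiag : ∀ j, Z j j = 1)
    (hoff : ∀ j k, j ≠ k → 0 ≤ Z j k) (hdd : ∀ j, ∑ k ∈ univ.erase j, Z j k < 1)
    (hZw : Z *ᵥ w = 1) {m : K} (hm : ∀ k, m ≤ w k) (hm0 : m ≤ 0) (i : ι) :
    w i ≤ 1 - m := by
  have hrow := add_sum_erase_mul_eq_one_of_mulVec_eq_one hdiag hZw i
  have hs : 0 ≤ ∑ k ∈ univ.erase i, Z i k :=
    sum_nonneg fun k hk => hoff i k (ne_of_mem_erase hk).symm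
  have hlow : m * ∑ k ∈ univ.erase i, Z i k ≤ ∑ k ∈ univ.erase i, Z i k * w k := by
    rw [mul_comm, sum_mul]
    exact sum_le_sum fun k hk =>
      mul_le_mul_of_nonneg_left (hm k) (hoff i k (ne_of_mem_erase hk).symm)
  nlinarith [hdd i]

theorem pos_of_mulVec_eq_one (hdiag : ∀ j, Z j j = 1) (hoff : ∀ j k, j ≠ k → 0 ≤ Z j k)
    (hdd : ∀ j, ∑ k ∈ univ.erase j, Z j k < 1) (hZw : Z *ᵥ w = 1) (j : ι) : 0 < w j := by
  have : Nonempty ι := ⟨j⟩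
  obtain ⟨i, hi⟩ := Finite.exists_min w
  suffices 0 < w i from this.trans_le (hi j)
  by_contra! hneg
  have hmax := le_one_sub_of_forall_le_of_nonpos hdiag hoff hdd hZw hi hneg
  have hrow := add_sum_erase_mul_eq_one_of_mulVec_eq_one hdiag hZw i
  have hup : ∑ k ∈ univ.erase i, Z i k * w k ≤ (1 - w i) * ∑ k ∈ univ.erase i, Z i k := by
    rw [mul_comm, sum_mul]
    exact sum_le_sum fun k hk =>
      mul_le_mul_of_nonneg_left (hmax k) (hoff i k (ne_of_mem_erase hk).symm)
  nlinarith [hdd i]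

end Weighting

end Matrix

open Matrix in
/-- A strictly diagonally dominant similarity matrix with unit diagonal and off-diagonal
entries in `[0,1)` is invertible, and its weighting `Z⁻¹ 1` is entrywise positive. -/
theorem sdd_weighting_pos (n : ℕ) (Z : Matrix (Fin n) (Fin n) ℝ)
    (hdiag : ∀ j, Z j j = 1)
    (hoff : ∀ j k, j ≠ k → 0 ≤ Z j k ∧ Z j k < 1)
    (hdd : ∀ j, ∑ k ∈ Finset.univ.erase j, Z j k < 1) :
    IsUnit Z.det ∧ ∀ j, 0 < Z⁻¹.mulVec 1 j := by
  have hnonneg : ∀ j k, j ≠ k → 0 ≤ Z j k := fun j k h => (hoff j k h).1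
  have hunit : IsUnit Z.det :=
    (det_ne_zero_of_sum_row_erase_lt_one Z hdiag hnonneg hdd).isUnit
  have hZw : Z *ᵥ (Z⁻¹ *ᵥ 1) = 1 := by
    rw [mulVec_mulVec, mul_nonsing_inv Z hunit, one_mulVec]
  exact ⟨hunit, pos_of_mulVec_eq_one hdiag hnonneg hdd hZw⟩
end
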